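/- arXiv:1809.04690 — 7 statements merged into one kernel-verified Lean document; each statement's English description precedes it below -/
import Mathlib

section
/- Let q be a prime power, F_q the finite field with q elements, and 1 ≤ t ≤ ℓ ≤ m integers. Let F ∈ Mat_{ℓ×m} be a matrix of rank r. Then #{M ∈ Mat_{ℓ×m} : rank M ≤ t and ⟨F,M⟩ ≠ 0} = #{M ∈ Mat_{ℓ×m} : rank M ≤ t and τ_r(M) ≠ 0}; that is, the Hamming weight of the determinantal codeword associated to F depends only on the rank of F and equals the weight of the codeword of the r-th partial trace. -/
/-!
Every matrix `F` of rank `r` is equivalent to the partial identity `E_r` (`partialIdentity`):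
`F = P E_r Q` with `P`, `Q` invertible. Since `⟨P E_r Q, M⟩ = ⟨E_r, Pᵀ M Qᵀ⟩` and
`M ↦ Pᵀ M Qᵀ` is a rank-preserving bijection, it carries the matrices of rank `≤ t` with
`⟨F, M⟩ ≠ 0` onto those with `⟨E_r, M⟩ = τ_r(M) ≠ 0`.
-/

open Finset Matrix

/-- The `r`-th partial trace `τ_r(M) = Σ_{i=1}^r M_{ii}`. -/
def ptrace {K : Type} [Field K] {a b : ℕ} (r : ℕ) (M : Matrix (Fin a) (Fin b) K) : K :=
  ∑ i ∈ Finset.range r, if h : i < a ∧ i < b then M ⟨i, h.1⟩ ⟨i, h.2⟩ else 0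

namespace Matrix

def partialIdentity (R : Type*) [Zero R] [One R] (l m r : ℕ) : Matrix (Fin l) (Fin m) R :=
  of fun i j => if (i : ℕ) = j ∧ (j : ℕ) < r then 1 else 0

theorem trace_partialIdentity_mul_transpose {K : Type} [Field K] {l m : ℕ} (r : ℕ)
    (M : Matrix (Fin l) (Fin m) K) : trace (partialIdentity K l m r * Mᵀ) = ptrace r M := by
  set g : ℕ → K := fun n => if h : n < l ∧ n < m then M ⟨n, h.1⟩ ⟨n, h.2⟩ else 0
  have hdiag (i : Fin l) :
      (partialIdentity K l m r * Mᵀ) i i = if (i : ℕ) < r then g i else 0 := by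
    rw [mul_apply]
    by_cases hm : (i : ℕ) < m
    · rw [sum_eq_single ⟨i, hm⟩
        (fun j _ hj => by
          rw [partialIdentity, of_apply, if_neg fun h => hj (Fin.ext h.1.symm), zero_mul])
        (by simp)]
      simp [partialIdentity, g, hm]
    · rw [sum_eq_zero fun j _ => by rw [partialIdentity, of_apply, if_neg (by omega), zero_mul]]
      simp [g, hm]
  calc trace (partialIdentity K l m r * Mᵀ)
      = ∑ n ∈ range l, if n < r then g n else 0 := by
        rw [trace, ← Fin.sum_univ_eq_sum_range (fun n => if n < r then g n else 0)]
        exact sum_congr rfl fun i _ => hdiag i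
    _ = ∑ n ∈ range r, if n < l then g n else 0 := by
        rw [← sum_filter, ← sum_filter]
        congr 1
        ext n
        simp only [mem_filter, mem_range]
        omega
    _ = ptrace r M := sum_congr rfl fun n _ => by
        by_cases hl : n < l <;> simp [g, hl]

section Equivalence

variable {n p R : Type*} [Fintype n] [Fintype p] [CommRing R]

theorem trace_mul_mul_mul_transpose (P : Matrix n n R) (F : Matrix n p R) (Q : Matrix p p R)
    (M : Matrix n p R) : trace (P * F * Q * Mᵀ) = trace (F * (Pᵀ * M * Qᵀ)ᵀ) := by
  rw [Matrix.mul_assoc, Matrix.mul_assoc, trace_mul_comm]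
  simp only [transpose_mul, transpose_transpose, Matrix.mul_assoc]

variable [DecidableEq n] [DecidableEq p]

theorem rank_mul_mul_of_isUnit_det {P : Matrix n n R} {Q : Matrix p p R} (hP : IsUnit P.det)
    (hQ : IsUnit Q.det) (M : Matrix n p R) : (P * M * Q).rank = M.rank := by
  rw [rank_mul_eq_left_of_isUnit_det Q _ hQ, rank_mul_eq_right_of_isUnit_det P M hP]

noncomputable def mulMulEquivOfIsUnitDet {P : Matrix n n R} {Q : Matrix p p R}
    (hP : IsUnit P.det) (hQ : IsUnit Q.det) : Matrix n p R ≃ Matrix n p R where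
  toFun M := P * M * Q
  invFun M := P⁻¹ * M * Q⁻¹
  left_inv M := by
    dsimp only
    rw [Matrix.mul_assoc P, nonsing_inv_mul_cancel_left _ _ hP,
      mul_nonsing_inv_cancel_right _ _ hQ]
  right_inv M := by
    dsimp only
    rw [← Matrix.mul_assoc P, ← Matrix.mul_assoc P, mul_nonsing_inv _ hP, Matrix.one_mul,
      nonsing_inv_mul_cancel_right _ _ hQ]

theorem natCard_rank_le_trace_mul_mul_mul_transpose_ne_zero {P : Matrix n n R}
    {Q : Matrix p p R} (hP : IsUnit P.det) (hQ : IsUnit Q.det) (F : Matrix n p R) (t : ℕ) :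
    Nat.card {M : Matrix n p R // M.rank ≤ t ∧ trace (P * F * Q * Mᵀ) ≠ 0} =
      Nat.card {M : Matrix n p R // M.rank ≤ t ∧ trace (F * Mᵀ) ≠ 0} := by
  have hPt : IsUnit Pᵀ.det := by rwa [det_transpose]
  have hQt : IsUnit Qᵀ.det := by rwa [det_transpose]
  refine Nat.card_congr ((mulMulEquivOfIsUnitDet hPt hQt).subtypeEquiv fun M => ?_)
  rw [trace_mul_mul_mul_transpose]
  simp only [mulMulEquivOfIsUnitDet, Equiv.coe_fn_mk, rank_mul_mul_of_isUnit_det hPt hQt]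

end Equivalence

end Matrix

section NormalForm

open Module Submodule LinearMap

variable {K V W : Type*} [Field K] [AddCommGroup V] [Module K V] [AddCommGroup W] [Module K W]
  [FiniteDimensional K V] [FiniteDimensional K W]

theorem LinearMap.exists_basis_sum_apply (f : V →ₗ[K] W) {r : ℕ}
    (hr : finrank K (range f) = r) :
    ∃ (b : Basis (Fin r ⊕ Fin (finrank K V - r)) K V)
      (c : Basis (Fin r ⊕ Fin (finrank K W - r)) K W),
      (∀ k, f (b (.inl k)) = c (.inl k)) ∧ ∀ k, f (b (.inr k)) = 0 := by
  obtain ⟨C, hC⟩ := (ker f).exists_isCompl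
  obtain ⟨D, hD⟩ := (range f).exists_isCompl
  have hker : finrank K (ker f) = finrank K V - r := by
    have := f.finrank_range_add_finrank_ker
    omega
  have hD' : finrank K D = finrank K W - r := by
    have := finrank_add_eq_of_isCompl hD
    omega
  let eC : C ≃ₗ[K] range f := (quotientEquivOfIsCompl _ _ hC).symm.trans f.quotKerEquivRange
  have heC (y : range f) : f (eC.symm y) = y := by
    obtain ⟨c, rfl⟩ := eC.surjective y
    simp [eC]
  let bR : Basis (Fin r) K (range f) := finBasisOfFinrankEq K _ hr
  -- `b`: a basis of the complement `C` of `ker f` (pulled back from `range f`), then one of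
  -- `ker f`; `c`: the basis of `range f`, then one of its complement `D`.
  refine ⟨((bR.map eC.symm).prod (finBasisOfFinrankEq K _ hker)).map
      (prodEquivOfIsCompl _ _ hC.symm),
    (bR.prod (finBasisOfFinrankEq K _ hD')).map (prodEquivOfIsCompl _ _ hD),
    fun k => by simp [heC], fun k => by simp⟩

theorem LinearMap.exists_basis_toMatrix_eq_partialIdentity (f : V →ₗ[K] W) {l m : ℕ}
    (hV : finrank K V = m) (hW : finrank K W = l) :
    ∃ (b : Basis (Fin m) K V) (c : Basis (Fin l) K W),
      toMatrix b c f = partialIdentity K l m (finrank K (range f)) := by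
  set r := finrank K (range f)
  have hrV : r ≤ finrank K V := f.finrank_range_le
  have hrW : r ≤ finrank K W := (range f).finrank_le
  obtain ⟨b, c, hinl, hinr⟩ := f.exists_basis_sum_apply rfl
  let eV := finSumFinEquiv.trans (finCongr (by omega : r + (finrank K V - r) = m))
  let eW := finSumFinEquiv.trans (finCongr (by omega : r + (finrank K W - r) = l))
  refine ⟨b.reindex eV, c.reindex eW, Matrix.ext fun i j => ?_⟩
  obtain ⟨i, rfl⟩ := eW.surjective i
  obtain ⟨j, rfl⟩ := eV.surjective j
  rcases j with j | j <;> rcases i with i | i <;>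
    simp [toMatrix_apply, partialIdentity, eV, eW, hinl, hinr, Finsupp.single_apply,
      Fin.ext_iff, eq_comm]

theorem Module.Basis.isUnit_det_toMatrix {ι R M : Type*} [Fintype ι] [DecidableEq ι]
    [CommRing R] [AddCommGroup M] [Module R M] (b b' : Basis ι R M) :
    IsUnit (b.toMatrix b').det :=
  IsUnit.of_mul_eq_one _ <| by rw [← det_mul, b.toMatrix_mul_toMatrix_flip, det_one]

theorem Matrix.exists_isUnit_det_mul_partialIdentity_mul_eq {l m : ℕ}
    (F : Matrix (Fin l) (Fin m) K) :
    ∃ (P : Matrix (Fin l) (Fin l) K) (Q : Matrix (Fin m) (Fin m) K),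
      IsUnit P.det ∧ IsUnit Q.det ∧ P * partialIdentity K l m F.rank * Q = F := by
  obtain ⟨b, c, hbc⟩ := LinearMap.exists_basis_toMatrix_eq_partialIdentity
    (toLin (Pi.basisFun K _) (Pi.basisFun K _) F) (finrank_fin_fun K) (finrank_fin_fun K)
  refine ⟨(Pi.basisFun K _).toMatrix c, b.toMatrix (Pi.basisFun K _),
    Basis.isUnit_det_toMatrix _ _, Basis.isUnit_det_toMatrix _ _, ?_⟩
  rw [rank_eq_finrank_range_toLin F (Pi.basisFun K _) (Pi.basisFun K _), ← hbc,
    basis_toMatrix_mul_linearMap_toMatrix_mul_basis_toMatrix, toMatrix_toLin]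

end NormalForm

theorem stmt_1_general (t l m r : ℕ)
    (K : Type) [Field K]
    (F : Matrix (Fin l) (Fin m) K) (hF : F.rank = r) :
    Nat.card {M : Matrix (Fin l) (Fin m) K //
        M.rank ≤ t ∧ Matrix.trace (F * Mᵀ) ≠ 0} =
      Nat.card {M : Matrix (Fin l) (Fin m) K //
        M.rank ≤ t ∧ ptrace r M ≠ 0} := by
  obtain ⟨P, Q, hP, hQ, hPQ⟩ := F.exists_isUnit_det_mul_partialIdentity_mul_eq
  rw [← hPQ, hF, natCard_rank_le_trace_mul_mul_mul_transpose_ne_zero hP hQ]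
  simp only [trace_partialIdentity_mul_transpose]

theorem stmt_1 (q t l m r : ℕ) (hq : IsPrimePow q)
    (K : Type) [Field K] [Fintype K] (hK : Fintype.card K = q)
    (ht : 1 ≤ t) (htl : t ≤ l) (hlm : l ≤ m)
    (F : Matrix (Fin l) (Fin m) K) (hF : F.rank = r) :
    Nat.card {M : Matrix (Fin l) (Fin m) K //
        M.rank ≤ t ∧ Matrix.trace (F * Mᵀ) ≠ 0} =
      Nat.card {M : Matrix (Fin l) (Fin m) K //
        M.rank ≤ t ∧ ptrace r M ≠ 0} :=
  stmt_1_general t l m r K F hF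
end

section
/- Let q be a prime power, F_q the finite field with q elements, and 1 ≤ r ≤ ℓ ≤ m integers. Then the number of ℓ×m matrices M over F_q of rank at most 1 with τ_r(M) ≠ 0 equals q^{ℓ+m−r−1}(q^r − 1). -/
open Finset Matrix

section Aux

variable {K : Type} [Field K] {a b : ℕ}

lemma aux_vecMulVec_mulVec (u : Fin a → K) (v : Fin b → K) (x : Fin b → K) :
    (vecMulVec u v).mulVec x = (v ⬝ᵥ x) • u := by
  ext i
  simp [mulVec, vecMulVec, dotProduct, Finset.sum_mul, smul_eq_mul, Finset.mul_sum,
    mul_comm, mul_left_comm]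

lemma aux_rank_vecMulVec_le (u : Fin a → K) (v : Fin b → K) : (vecMulVec u v).rank ≤ 1 := by
  have h : LinearMap.range (vecMulVec u v).mulVecLin ≤ Submodule.span K {u} := by
    rintro x ⟨y, rfl⟩
    rw [mulVecLin_apply, aux_vecMulVec_mulVec]
    exact Submodule.smul_mem _ _ (Submodule.mem_span_singleton_self u)
  calc (vecMulVec u v).rank = Module.finrank K (LinearMap.range (vecMulVec u v).mulVecLin) := rfl
    _ ≤ Module.finrank K (Submodule.span K {u}) := Submodule.finrank_mono h
    _ ≤ 1 := by
      simpa using finrank_span_le_card (R := K) ({u} : Set (Fin a → K))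

lemma aux_exists_decomp {M : Matrix (Fin a) (Fin b) K} (hM : M.rank ≤ 1) (hM0 : M ≠ 0) :
    ∃ u v, M = vecMulVec u v := by
  obtain ⟨i0, j0, hij⟩ : ∃ i j, M i j ≠ 0 := by
    by_contra h; push_neg at h; exact hM0 (by ext i j; simp [h])
  set u : Fin a → K := fun i => M i j0 with hu
  have hu0 : u ≠ 0 := fun h => hij (by simpa [hu] using congrFun h i0)
  have hcol : ∀ j, (fun i => M i j) ∈ LinearMap.range M.mulVecLin := by
    intro j
    exact ⟨Pi.single j 1, by ext i; simp [mulVecLin_apply, mulVec_single]⟩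
  have hle : Submodule.span K {u} ≤ LinearMap.range M.mulVecLin :=
    Submodule.span_le.2 (by rintro x rfl; exact hcol j0)
  have heq : Submodule.span K {u} = LinearMap.range M.mulVecLin := by
    apply Submodule.eq_of_le_of_finrank_le hle
    calc Module.finrank K (LinearMap.range M.mulVecLin) = M.rank := rfl
      _ ≤ 1 := hM
      _ = Module.finrank K (Submodule.span K {u}) := (finrank_span_singleton hu0).symm
  have hmem : ∀ j, ∃ c : K, c • u = (fun i => M i j) := by
    intro j
    exact Submodule.mem_span_singleton.1 (heq ▸ hcol j)
  choose v hv using hmem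
  refine ⟨u, v, ?_⟩
  ext i j
  have := congrFun (hv j) i
  simp only [Pi.smul_apply, smul_eq_mul] at this
  rw [vecMulVec_apply, ← this, mul_comm]

lemma aux_card_ker_mul_card {V W : Type} [AddCommGroup V] [AddCommGroup W] (f : V →+ W)
    (hf : Function.Surjective f) :
    Nat.card W * Nat.card {v : V // f v = 0} = Nat.card V := by
  have h1 := AddSubgroup.card_eq_card_quotient_mul_card_addSubgroup f.ker
  have h2 : Nat.card (V ⧸ f.ker) = Nat.card W :=
    Nat.card_congr (QuotientAddGroup.quotientKerEquivOfSurjective f hf).toEquiv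
  have h3 : Nat.card {v : V // f v = 0} = Nat.card f.ker :=
    Nat.card_congr (Equiv.subtypeEquivRight (fun x => (f.mem_ker (x := x)).symm))
  rw [h3, ← h2, ← h1]

end Aux

theorem stmt_2 (q l m r : ℕ) (hq : IsPrimePow q)
    (K : Type) [Field K] [Fintype K] (hK : Fintype.card K = q)
    (hr : 1 ≤ r) (hrl : r ≤ l) (hlm : l ≤ m) :
    Nat.card {M : Matrix (Fin l) (Fin m) K // M.rank ≤ 1 ∧ ptrace r M ≠ 0} =
      q ^ (l + m - r - 1) * (q ^ r - 1) := by
  classical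
  have hq2 : 2 ≤ q := hq.two_le
  have hq0 : 0 < q := by omega
  have hrm : r ≤ m := hrl.trans hlm
  set il : Fin r → Fin l := Fin.castLE hrl with hil
  set im : Fin r → Fin m := Fin.castLE hrm with him
  have him_inj : Function.Injective im := Fin.castLE_injective _
  set s : (Fin l → K) → (Fin m → K) → K := fun u v => ∑ i : Fin r, u (il i) * v (im i) with hs
  have hsuv : ∀ u v, s u v = ∑ i : Fin r, u (il i) * v (im i) := fun _ _ => rfl
  have hpt : ∀ M : Matrix (Fin l) (Fin m) K, ptrace r M = ∑ i : Fin r, M (il i) (im i) := by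
    intro M
    rw [ptrace, Finset.sum_range]
    refine Finset.sum_congr rfl fun i _ => ?_
    rw [dif_pos ⟨lt_of_lt_of_le i.2 hrl, lt_of_lt_of_le i.2 hrm⟩]
    rfl
  have hptv : ∀ (u : Fin l → K) (v : Fin m → K), ptrace r (vecMulVec u v) = s u v := by
    intro u v
    rw [hpt, hsuv]
    rfl
  have cardfun : ∀ n : ℕ, Fintype.card (Fin n → K) = q ^ n := by
    intro n; simp [hK]
  -- truncation map
  set T : (Fin l → K) →+ (Fin r → K) :=
    { toFun := fun u i => u (il i), map_zero' := rfl, map_add' := fun _ _ => rfl } with hT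
  have hTapp : ∀ (u : Fin l → K) (i : Fin r), T u i = u (il i) := fun _ _ => rfl
  have hTsurj : Function.Surjective T := by
    intro h
    refine ⟨fun j => if hj : (j : ℕ) < r then h ⟨j, hj⟩ else 0, ?_⟩
    ext i
    rw [hTapp]
    have h2 : ((il i : Fin l) : ℕ) < r := i.2
    rw [dif_pos h2]
    exact congrArg h (Fin.ext rfl)
  have cardT0 : Fintype.card {u : Fin l → K // T u = 0} = q ^ (l - r) := by
    have h := aux_card_ker_mul_card T hTsurj
    simp only [Nat.card_eq_fintype_card, cardfun] at h
    have hl : q ^ l = q ^ r * q ^ (l - r) := by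
      rw [← pow_add]; congr 1; omega
    rw [hl] at h
    exact Nat.eq_of_mul_eq_mul_left (by positivity) h
  -- count of v's with s u v ≠ 0, for fixed u
  have hvcount : ∀ u : Fin l → K, ¬ (T u = 0) →
      Fintype.card {v : Fin m → K // ¬ (s u v = 0)} = q ^ m - q ^ (m - 1) := by
    intro u hu
    obtain ⟨i0, hi0⟩ : ∃ i : Fin r, u (il i) ≠ 0 := by
      by_contra h; push_neg at h
      exact hu (by ext i; rw [hTapp]; exact h i)
    set F : (Fin m → K) →+ K :=
      { toFun := fun v => s u v
        map_zero' := by simp [hsuv]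
        map_add' := fun x y => by simp [hsuv, mul_add, Finset.sum_add_distrib] }
    have hFsurj : Function.Surjective F := by
      intro c
      refine ⟨Pi.single (im i0) ((u (il i0))⁻¹ * c), ?_⟩
      show s u _ = c
      rw [hsuv, Finset.sum_eq_single i0]
      · rw [Pi.single_eq_same]
        field_simp
      · intro j _ hj
        rw [Pi.single_eq_of_ne (fun hc => hj (him_inj hc)), mul_zero]
      · intro h; exact absurd (Finset.mem_univ i0) h
    have hker : Fintype.card {v : Fin m → K // s u v = 0} = q ^ (m - 1) := by
      have h := aux_card_ker_mul_card F hFsurj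
      simp only [Nat.card_eq_fintype_card, cardfun, hK] at h
      have hm1 : q ^ m = q * q ^ (m - 1) := by
        rw [← pow_succ']; congr 1; omega
      rw [hm1] at h
      exact Nat.eq_of_mul_eq_mul_left hq0 h
    have h := Fintype.card_subtype_compl (fun v : Fin m → K => s u v = 0)
    rw [hker, cardfun] at h
    exact h
  have hvcount0 : ∀ u : Fin l → K, T u = 0 →
      Fintype.card {v : Fin m → K // ¬ (s u v = 0)} = 0 := by
    intro u hu
    rw [Fintype.card_eq_zero_iff]
    constructor
    rintro ⟨v, hv⟩
    apply hv
    rw [hsuv]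
    refine Finset.sum_eq_zero fun i _ => ?_
    have h0 : u (il i) = 0 := by
      have h0 := congrFun hu i
      rwa [hTapp] at h0
    rw [h0, zero_mul]
  -- count of pairs
  have cardA : Fintype.card {p : (Fin l → K) × (Fin m → K) // ¬ (s p.1 p.2 = 0)} =
      (q ^ l - q ^ (l - r)) * (q ^ m - q ^ (m - 1)) := by
    rw [Fintype.card_congr (Equiv.subtypeProdEquivSigmaSubtype (fun u v => ¬ (s u v = 0))),
      Fintype.card_sigma]
    have key : ∀ u : Fin l → K, Fintype.card {v : Fin m → K // ¬ (s u v = 0)} =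
        if T u = 0 then 0 else q ^ m - q ^ (m - 1) := by
      intro u
      by_cases h : T u = 0
      · rw [if_pos h, hvcount0 u h]
      · rw [if_neg h, hvcount u h]
    simp only [key]
    rw [Finset.sum_ite, Finset.sum_const_zero, Finset.sum_const, zero_add, smul_eq_mul]
    congr 1
    have hcompl := Fintype.card_subtype_compl (fun u : Fin l → K => T u = 0)
    rw [cardT0, cardfun] at hcompl
    rw [← hcompl, Fintype.card_subtype]
  -- fiberwise counting over matrices
  set A : Finset ((Fin l → K) × (Fin m → K)) :=
    Finset.univ.filter (fun p => ¬ (s p.1 p.2 = 0)) with hA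
  set B : Finset (Matrix (Fin l) (Fin m) K) :=
    Finset.univ.filter (fun M => M.rank ≤ 1 ∧ ptrace r M ≠ 0) with hB
  have hmaps : ∀ p ∈ A, vecMulVec p.1 p.2 ∈ B := by
    intro p hp
    rw [hA, Finset.mem_filter] at hp
    rw [hB, Finset.mem_filter]
    exact ⟨Finset.mem_univ _, aux_rank_vecMulVec_le _ _, by rw [hptv]; exact hp.2⟩
  have hfiber : ∀ M ∈ B, (A.filter (fun p => vecMulVec p.1 p.2 = M)).card = q - 1 := by
    intro M hM
    rw [hB, Finset.mem_filter] at hM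
    obtain ⟨-, hMrk, hMpt⟩ := hM
    have hM0 : M ≠ 0 := by
      rintro rfl
      exact hMpt (by rw [hpt]; simp)
    obtain ⟨u₀, v₀, rfl⟩ := aux_exists_decomp hMrk hM0
    have hs0 : s u₀ v₀ ≠ 0 := by rw [← hptv]; exact hMpt
    have hsum : ∑ i : Fin r, u₀ (il i) * v₀ (im i) ≠ 0 := by rw [← hsuv]; exact hs0
    obtain ⟨i0, -, hi0⟩ := Finset.exists_ne_zero_of_sum_ne_zero hsum
    have hu0 : u₀ (il i0) ≠ 0 := fun h => hi0 (by rw [h, zero_mul])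
    have hv0 : v₀ (im i0) ≠ 0 := fun h => hi0 (by rw [h, mul_zero])
    rw [show (q - 1 : ℕ) = (Finset.univ.filter (fun x : K => x ≠ 0)).card by
      rw [Finset.filter_ne', Finset.card_erase_of_mem (Finset.mem_univ _), Finset.card_univ, hK]]
    apply Finset.card_bij'
      (fun (p : (Fin l → K) × (Fin m → K)) (_ : p ∈ A.filter (fun p => vecMulVec p.1 p.2 = vecMulVec u₀ v₀)) =>
        p.1 (il i0) * (u₀ (il i0))⁻¹)
      (fun (lam : K) (_ : lam ∈ Finset.univ.filter (fun x : K => x ≠ 0)) =>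
        (lam • u₀, lam⁻¹ • v₀))
    · -- maps to: nonzero
      intro p hp
      rw [Finset.mem_filter] at hp
      obtain ⟨hpA, hpM⟩ := hp
      have he : p.1 (il i0) * p.2 (im i0) = u₀ (il i0) * v₀ (im i0) := by
        have := congrFun (congrFun hpM (il i0)) (im i0)
        simpa [vecMulVec_apply] using this
      have hp1 : p.1 (il i0) ≠ 0 := by
        intro h; rw [h, zero_mul] at he; exact hi0 he.symm
      simp only [Finset.mem_filter, Finset.mem_univ, true_and]
      exact mul_ne_zero hp1 (inv_ne_zero hu0)
    · -- maps back into the fiber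
      intro lam hlam
      simp only [Finset.mem_filter, Finset.mem_univ, true_and] at hlam
      have hveq : vecMulVec (lam • u₀) (lam⁻¹ • v₀) = vecMulVec u₀ v₀ := by
        ext i j
        simp only [vecMulVec_apply, Pi.smul_apply, smul_eq_mul]
        field_simp
      rw [Finset.mem_filter]
      refine ⟨?_, hveq⟩
      rw [hA, Finset.mem_filter]
      refine ⟨Finset.mem_univ _, ?_⟩
      rw [← hptv, hveq, hptv]
      exact hs0
    · -- left inverse
      intro p hp
      rw [Finset.mem_filter] at hp
      obtain ⟨hpA, hpM⟩ := hp
      have key : ∀ i j, p.1 i * p.2 j = u₀ i * v₀ j := by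
        intro i j
        have := congrFun (congrFun hpM i) j
        simpa [vecMulVec_apply] using this
      have he := key (il i0) (im i0)
      have hp1 : p.1 (il i0) ≠ 0 := by
        intro h; rw [h, zero_mul] at he; exact hi0 he.symm
      have hp2 : p.2 (im i0) ≠ 0 := by
        intro h; rw [h, mul_zero] at he; exact hi0 he.symm
      have cross : ∀ i, p.1 (il i0) * u₀ i = p.1 i * u₀ (il i0) := by
        intro i
        apply mul_right_cancel₀ hv0
        calc p.1 (il i0) * u₀ i * v₀ (im i0) = p.1 (il i0) * (u₀ i * v₀ (im i0)) := by ring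
          _ = p.1 (il i0) * (p.1 i * p.2 (im i0)) := by rw [← key i (im i0)]
          _ = p.1 i * (p.1 (il i0) * p.2 (im i0)) := by ring
          _ = p.1 i * (u₀ (il i0) * v₀ (im i0)) := by rw [he]
          _ = p.1 i * u₀ (il i0) * v₀ (im i0) := by ring
      have h1 : (p.1 (il i0) * (u₀ (il i0))⁻¹) • u₀ = p.1 := by
        ext i
        simp only [Pi.smul_apply, smul_eq_mul]
        calc p.1 (il i0) * (u₀ (il i0))⁻¹ * u₀ i
            = (p.1 (il i0) * u₀ i) * (u₀ (il i0))⁻¹ := by ring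
          _ = (p.1 i * u₀ (il i0)) * (u₀ (il i0))⁻¹ := by rw [cross i]
          _ = p.1 i := by field_simp
      have h2 : (p.1 (il i0) * (u₀ (il i0))⁻¹)⁻¹ • v₀ = p.2 := by
        ext j
        simp only [Pi.smul_apply, smul_eq_mul]
        rw [_root_.mul_inv_rev, inv_inv]
        calc (u₀ (il i0)) * (p.1 (il i0))⁻¹ * v₀ j
            = (u₀ (il i0) * v₀ j) * (p.1 (il i0))⁻¹ := by ring
          _ = (p.1 (il i0) * p.2 j) * (p.1 (il i0))⁻¹ := by rw [← key (il i0) j]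
          _ = p.2 j := by field_simp
      exact Prod.ext h1 h2
    · -- right inverse
      intro lam hlam
      simp only [Finset.mem_filter, Finset.mem_univ, true_and] at hlam
      simp only [Pi.smul_apply, smul_eq_mul]
      field_simp
  have hcardA' : A.card = B.card * (q - 1) := by
    rw [Finset.card_eq_sum_card_fiberwise hmaps, Finset.sum_congr rfl hfiber,
      Finset.sum_const, smul_eq_mul]
  have hcardA : A.card = (q ^ l - q ^ (l - r)) * (q ^ m - q ^ (m - 1)) := by
    rw [← cardA, Fintype.card_subtype]
  -- arithmetic
  obtain ⟨a, rfl⟩ : ∃ a, l = a + r := ⟨l - r, by omega⟩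
  obtain ⟨b, rfl⟩ : ∃ b, m = b + 1 := ⟨m - 1, by omega⟩
  have harith : (q ^ (a + r) - q ^ ((a + r) - r)) * (q ^ (b + 1) - q ^ ((b + 1) - 1)) =
      (q ^ ((a + r) + (b + 1) - r - 1) * (q ^ r - 1)) * (q - 1) := by
    have e1 : (a + r) - r = a := by omega
    have e2 : (b + 1) - 1 = b := by omega
    have e3 : (a + r) + (b + 1) - r - 1 = a + b := by omega
    rw [e1, e2, e3, pow_add, pow_add, pow_add]
    have p3 : 1 ≤ q ^ r := Nat.one_le_pow _ _ hq0
    have p1 : q ^ a * 1 ≤ q ^ a * q ^ r := Nat.mul_le_mul_left _ p3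
    have p2a : q ^ b ≤ q * q ^ b := Nat.le_mul_of_pos_left _ hq0
    have p2b : q ^ b ≤ q ^ b * q := Nat.le_mul_of_pos_right _ hq0
    rw [mul_one] at p1
    have hq1 : 1 ≤ q := hq0
    zify [p1, p2a, p2b, p3, hq1, pow_one]
    ring
  have hgoal : Nat.card {M : Matrix (Fin (a + r)) (Fin (b + 1)) K // M.rank ≤ 1 ∧ ptrace r M ≠ 0}
      = B.card := by
    rw [Nat.card_eq_fintype_card, Fintype.card_subtype]
  rw [hgoal]
  have hfin := hcardA.symm.trans hcardA'
  rw [harith] at hfin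
  exact Nat.eq_of_mul_eq_mul_right (by omega) hfin.symm
end

section
/- Let q be a prime power, F_q the finite field with q elements, and 1 ≤ t ≤ ℓ ≤ m integers. Then the number of ℓ×m matrices M over F_q with rank M ≤ t and M_{11} ≠ 0 equals (q−1) · q^{ℓ+m−2} · ν_{t−1}(ℓ−1, m−1). -/
open Finset Matrix

/-- `nu K a b t` is the number of `a × b` matrices over the field `K` of rank at most `t`. -/
noncomputable def nu (K : Type) [Field K] [Fintype K] (a b t : ℕ) : ℕ :=
  Nat.card {M : Matrix (Fin a) (Fin b) K // M.rank ≤ t}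

section Aux

open Module LinearMap

open Finset Matrix Module LinearMap

variable {K : Type} [Field K]

lemma rank_reindex' {m n m' n' : Type} [Fintype n] [Fintype n'] (e₁ : m ≃ m') (e₂ : n ≃ n')
    (A : Matrix m n K) : (Matrix.reindex e₁ e₂ A).rank = A.rank := by
  rw [Matrix.rank, Matrix.rank, Matrix.mulVecLin_reindex, LinearMap.range_comp,
    LinearMap.range_comp, LinearEquiv.range, Submodule.map_top, LinearEquiv.finrank_map_eq]

lemma rank_mul_inv_left {n o : Type} [Fintype n] [DecidableEq n] [Fintype o]
    (U : Matrix n n K) [Invertible U] (A : Matrix n o K) : (U * A).rank = A.rank := by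
  refine le_antisymm (Matrix.rank_mul_le_right U A) ?_
  conv_lhs => rw [← Matrix.invOf_mul_cancel_left U A]
  exact Matrix.rank_mul_le_right (⅟U) (U * A)

lemma rank_mul_inv_right {n o : Type} [Fintype n] [DecidableEq n] [Fintype o]
    (A : Matrix o n K) (U : Matrix n n K) [Invertible U] : (A * U).rank = A.rank := by
  refine le_antisymm (Matrix.rank_mul_le_left A U) ?_
  conv_lhs => rw [← Matrix.mul_invOf_cancel_right A U]
  exact Matrix.rank_mul_le_left (A * U) (⅟U)

lemma range_prodMap' {M N P Q : Type} [AddCommGroup M] [AddCommGroup N] [AddCommGroup P]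
    [AddCommGroup Q] [Module K M] [Module K N] [Module K P] [Module K Q]
    (f : M →ₗ[K] N) (g : P →ₗ[K] Q) :
    LinearMap.range (f.prodMap g) = (LinearMap.range f).prod (LinearMap.range g) := by
  ext ⟨x, y⟩
  constructor
  · rintro ⟨⟨a, b⟩, h⟩
    rw [Prod.ext_iff] at h
    exact ⟨⟨a, h.1⟩, ⟨b, h.2⟩⟩
  · rintro ⟨⟨a, ha⟩, ⟨b, hb⟩⟩
    exact ⟨(a, b), by simp [LinearMap.prodMap_apply, ha, hb]⟩

/-- A product of submodules is linearly equivalent to the product of the submodules. -/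
def prodSubEquiv {M N : Type} [AddCommGroup M] [AddCommGroup N] [Module K M] [Module K N]
    (p : Submodule K M) (q : Submodule K N) : (p.prod q) ≃ₗ[K] p × q where
  toFun x := (⟨x.1.1, x.2.1⟩, ⟨x.1.2, x.2.2⟩)
  map_add' _ _ := rfl
  map_smul' _ _ := rfl
  invFun x := ⟨(x.1.1, x.2.1), ⟨x.1.2, x.2.2⟩⟩
  left_inv _ := rfl
  right_inv _ := rfl

lemma finrank_prod' {M N : Type} [AddCommGroup M] [AddCommGroup N] [Module K M] [Module K N]
    [FiniteDimensional K M] [FiniteDimensional K N] (p : Submodule K M) (q : Submodule K N) :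
    finrank K (p.prod q) = finrank K p + finrank K q := by
  rw [LinearEquiv.finrank_eq (prodSubEquiv p q), Module.finrank_prod]

lemma rank_fromBlocks_diag {α β γ δ : Type} [Fintype α] [Fintype β] [Fintype γ] [Fintype δ]
    (A : Matrix α γ K) (D : Matrix β δ K) :
    (fromBlocks A 0 0 D).rank = A.rank + D.rank := by
  have h : (fromBlocks A (0 : Matrix α δ K) (0 : Matrix β γ K) D).mulVecLin =
      (LinearEquiv.sumArrowLequivProdArrow α β K K).symm.toLinearMap ∘ₗ
        (A.mulVecLin.prodMap D.mulVecLin) ∘ₗ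
        (LinearEquiv.sumArrowLequivProdArrow γ δ K K).toLinearMap := by
    apply LinearMap.ext; intro v
    have hv : v = Sum.elim (v ∘ Sum.inl) (v ∘ Sum.inr) := (Sum.elim_comp_inl_inr v).symm
    rw [Matrix.mulVecLin_apply, hv, Matrix.fromBlocks_mulVec]
    funext i
    cases i <;>
      simp [LinearEquiv.sumArrowLequivProdArrow, Equiv.sumArrowEquivProdArrow]
  rw [Matrix.rank, h, LinearMap.range_comp, LinearMap.range_comp, LinearEquiv.range,
    Submodule.map_top, LinearEquiv.finrank_map_eq, range_prodMap', finrank_prod',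
    Matrix.rank, Matrix.rank]


lemma rank_fromBlocks_smul_one {l' m' : ℕ} (a : K) (ha : a ≠ 0)
    (B : Matrix (Fin 1) (Fin m') K) (C : Matrix (Fin l') (Fin 1) K)
    (D : Matrix (Fin l') (Fin m') K) :
    (fromBlocks (a • 1 : Matrix (Fin 1) (Fin 1) K) B C D).rank
      = 1 + (D - a⁻¹ • (C * B)).rank := by
  letI : Invertible (a • 1 : Matrix (Fin 1) (Fin 1) K) :=
    ⟨a⁻¹ • 1, by rw [Matrix.smul_mul, Matrix.one_mul, smul_smul, inv_mul_cancel₀ ha, one_smul],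
      by rw [Matrix.smul_mul, Matrix.one_mul, smul_smul, mul_inv_cancel₀ ha, one_smul]⟩
  have hinv : ⅟(a • 1 : Matrix (Fin 1) (Fin 1) K) = a⁻¹ • 1 := rfl
  rw [Matrix.fromBlocks_eq_of_invertible₁₁]
  letI : Invertible (1 : Matrix (Fin 1) (Fin 1) K) := invertibleOne
  letI : Invertible (1 : Matrix (Fin l') (Fin l') K) := invertibleOne
  letI : Invertible (1 : Matrix (Fin m') (Fin m') K) := invertibleOne
  letI i1 := Matrix.fromBlocksZero₁₂Invertible (1 : Matrix (Fin 1) (Fin 1) K)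
    (C * ⅟(a • 1 : Matrix (Fin 1) (Fin 1) K)) (1 : Matrix (Fin l') (Fin l') K)
  letI i2 := Matrix.fromBlocksZero₂₁Invertible (1 : Matrix (Fin 1) (Fin 1) K)
    (⅟(a • 1 : Matrix (Fin 1) (Fin 1) K) * B) (1 : Matrix (Fin m') (Fin m') K)
  rw [rank_mul_inv_right, rank_mul_inv_left, rank_fromBlocks_diag]
  have h1 : (a • 1 : Matrix (Fin 1) (Fin 1) K).rank = 1 := by
    rw [Matrix.rank_of_isUnit _ (isUnit_of_invertible _), Fintype.card_fin]
  rw [h1, hinv]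
  congr 2
  rw [Matrix.mul_smul, Matrix.mul_one, Matrix.smul_mul]


lemma toBlocks11_eq {l' m' : ℕ} (N : Matrix (Fin 1 ⊕ Fin l') (Fin 1 ⊕ Fin m') K) :
    N.toBlocks₁₁ = (N (Sum.inl 0) (Sum.inl 0)) • (1 : Matrix (Fin 1) (Fin 1) K) := by
  ext i j
  fin_cases i; fin_cases j
  simp [Matrix.toBlocks₁₁]

/-- Schur-complement based parametrization of block matrices with invertible top-left entry. -/
def schurEquiv {l' m' : ℕ} (t : ℕ) (ht : 1 ≤ t) :
    {N : Matrix (Fin 1 ⊕ Fin l') (Fin 1 ⊕ Fin m') K //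
        N.rank ≤ t ∧ N (Sum.inl 0) (Sum.inl 0) ≠ 0}
    ≃ {a : K // a ≠ 0} × Matrix (Fin 1) (Fin m') K × Matrix (Fin l') (Fin 1) K ×
        {S : Matrix (Fin l') (Fin m') K // S.rank ≤ t - 1} where
  toFun N := (⟨N.1 (Sum.inl 0) (Sum.inl 0), N.2.2⟩, N.1.toBlocks₁₂, N.1.toBlocks₂₁,
    ⟨N.1.toBlocks₂₂ - (N.1 (Sum.inl 0) (Sum.inl 0))⁻¹ • (N.1.toBlocks₂₁ * N.1.toBlocks₁₂), by
      have key : N.1 = fromBlocks ((N.1 (Sum.inl 0) (Sum.inl 0)) • 1) N.1.toBlocks₁₂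
          N.1.toBlocks₂₁ N.1.toBlocks₂₂ := by
        conv_lhs => rw [← Matrix.fromBlocks_toBlocks N.1, toBlocks11_eq N.1]
      have hr := N.2.1
      rw [key, rank_fromBlocks_smul_one _ N.2.2] at hr
      omega⟩)
  invFun x := ⟨fromBlocks (x.1.1 • 1) x.2.1 x.2.2.1
      (x.2.2.2.1 + x.1.1⁻¹ • (x.2.2.1 * x.2.1)), by
    refine ⟨?_, by simpa using x.1.2⟩
    rw [rank_fromBlocks_smul_one _ x.1.2, add_sub_cancel_right]
    have := x.2.2.2.2
    omega⟩
  left_inv N := by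
    obtain ⟨N, hr, h0⟩ := N
    apply Subtype.ext
    simp only
    rw [sub_add_cancel]
    conv_rhs => rw [← Matrix.fromBlocks_toBlocks N, toBlocks11_eq N]
  right_inv x := by
    obtain ⟨⟨a, ha⟩, B, C, S, hS⟩ := x
    have h0 : (fromBlocks (a • 1 : Matrix (Fin 1) (Fin 1) K) B C
        (S + a⁻¹ • (C * B))) (Sum.inl 0) (Sum.inl 0) = a := by simp
    ext <;>
      simp [h0, Matrix.toBlocks_fromBlocks₁₂, Matrix.toBlocks_fromBlocks₂₁,
        Matrix.toBlocks_fromBlocks₂₂]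


end Aux

theorem stmt_3 (q t l m : ℕ) (hq : IsPrimePow q)
    (K : Type) [Field K] [Fintype K] (hK : Fintype.card K = q)
    (ht : 1 ≤ t) (htl : t ≤ l) (hlm : l ≤ m) :
    Nat.card {M : Matrix (Fin l) (Fin m) K //
        M.rank ≤ t ∧ M ⟨0, by omega⟩ ⟨0, by omega⟩ ≠ 0} =
      (q - 1) * q ^ (l + m - 2) * nu K (l - 1) (m - 1) (t - 1) := by
  obtain ⟨l', rfl⟩ : ∃ l', l = l' + 1 := ⟨l - 1, by omega⟩
  obtain ⟨m', rfl⟩ : ∃ m', m = m' + 1 := ⟨m - 1, by omega⟩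
  set eR : Fin 1 ⊕ Fin l' ≃ Fin (l' + 1) := finSumFinEquiv.trans (finCongr (by omega)) with heRdef
  set eC : Fin 1 ⊕ Fin m' ≃ Fin (m' + 1) := finSumFinEquiv.trans (finCongr (by omega)) with heCdef
  have heR : eR (Sum.inl 0) = (⟨0, by omega⟩ : Fin (l' + 1)) := by
    apply Fin.ext
    simp [heRdef]
  have heC : eC (Sum.inl 0) = (⟨0, by omega⟩ : Fin (m' + 1)) := by
    apply Fin.ext
    simp [heCdef]
  have e1 : {M : Matrix (Fin (l' + 1)) (Fin (m' + 1)) K //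
        M.rank ≤ t ∧ M ⟨0, by omega⟩ ⟨0, by omega⟩ ≠ 0} ≃
      {N : Matrix (Fin 1 ⊕ Fin l') (Fin 1 ⊕ Fin m') K //
        N.rank ≤ t ∧ N (Sum.inl 0) (Sum.inl 0) ≠ 0} := by
    refine Equiv.subtypeEquiv (Matrix.reindex eR.symm eC.symm) fun M => ?_
    rw [rank_reindex']
    simp [heR, heC]
  rw [Nat.card_congr (e1.trans (schurEquiv t ht)), Nat.card_prod, Nat.card_prod, Nat.card_prod]
  letI := Classical.decEq K
  have c1 : Nat.card {a : K // a ≠ 0} = q - 1 := by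
    rw [Nat.card_eq_fintype_card, ← hK, Fintype.card_subtype_compl, Fintype.card_subtype_eq]
  have c2 : Nat.card (Matrix (Fin 1) (Fin m') K) = q ^ m' := by
    have h : Nat.card (Matrix (Fin 1) (Fin m') K) = Nat.card (Fin 1 → Fin m' → K) := rfl
    rw [h, Nat.card_eq_fintype_card, Fintype.card_fun, Fintype.card_fun, hK, Fintype.card_fin,
      Fintype.card_fin, pow_one]
  have c3 : Nat.card (Matrix (Fin l') (Fin 1) K) = q ^ l' := by
    have h : Nat.card (Matrix (Fin l') (Fin 1) K) = Nat.card (Fin l' → Fin 1 → K) := rfl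
    rw [h, Nat.card_eq_fintype_card, Fintype.card_fun, Fintype.card_fun, hK, Fintype.card_fin,
      Fintype.card_fin, pow_one]
  have c4 : Nat.card {S : Matrix (Fin l') (Fin m') K // S.rank ≤ t - 1} =
      nu K (l' + 1 - 1) (m' + 1 - 1) (t - 1) := rfl
  rw [c1, c2, c3, c4]
  have harith : l' + 1 + (m' + 1) - 2 = l' + m' := by omega
  rw [harith, pow_add]
  ring
end

section
/- Let q be a prime power, F_q the finite field with q elements, and integers 1 ≤ r ≤ ℓ ≤ m and 1 ≤ t < ℓ. Then w_r(t;ℓ,m) = q^t · 𝔴_{r−1}(t;ℓ−1,m−1) + (q−1)q^{t−1} (μ_t(ℓ−1,m) − μ_t(ℓ−1,m−1)) + (q−1)q^{m−1} ν_{t−1}(ℓ−1,m). -/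
/-!
Write `M` as its first row `x` on top of an `(ℓ-1) × m` block `P`. Then
`τ_r(M) = x₀ + τ_{r-1}(P')`, where `P'` is `P` without its first column, and `rank M ≤ t` leaves
`x` free when `rank P < t`, forces `x` into the row space of `P` when `rank P = t`, and is
impossible when `rank P > t`. Inside a subspace, the vectors with `x₀ ≠ c` number
`(q-1) q^(dim-1)` unless `x₀` vanishes on the whole subspace. For the row space of `P` this
happens exactly when the first column of `P` is zero; then `P ↦ P'` preserves the rank, and there
are `q^t` or no admissible `x` according as `τ_{r-1}(P') ≠ 0` or not. Summing over `P` gives the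
three terms, the blocks of rank `t` with a nonzero first column numbering
`μ_t(ℓ-1,m) - μ_t(ℓ-1,m-1)`.
-/

open Finset Matrix

/-- `mu K a b t` is the number of `a × b` matrices over the field `K` of rank exactly `t`. -/
noncomputable def mu (K : Type) [Field K] [Fintype K] (a b t : ℕ) : ℕ :=
  Nat.card {M : Matrix (Fin a) (Fin b) K // M.rank = t}

/-- `wfrak K a b r t` is the number of `a × b` matrices over `K` of rank exactly `t`
with `τ_r(M) ≠ 0`, i.e. the quantity `𝔴_r(t; a, b)`. -/
noncomputable def wfrak (K : Type) [Field K] [Fintype K] (a b r t : ℕ) : ℕ :=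
  Nat.card {M : Matrix (Fin a) (Fin b) K // M.rank = t ∧ ptrace r M ≠ 0}

/-- `wle K a b r t` is the number of `a × b` matrices over `K` of rank at most `t`
with `τ_r(M) ≠ 0`, i.e. the quantity `w_r(t; a, b)`. -/
noncomputable def wle (K : Type) [Field K] [Fintype K] (a b r t : ℕ) : ℕ :=
  Nat.card {M : Matrix (Fin a) (Fin b) K // M.rank ≤ t ∧ ptrace r M ≠ 0}


open Module Submodule

section Counting

variable {K V : Type*} [Field K] [Fintype K] [AddCommGroup V] [Module K V] [Fintype V]

theorem Module.Dual.natCard_apply_ne {φ : Module.Dual K V} (hφ : φ ≠ 0) (d : K) :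
    Nat.card {v : V // φ v ≠ d} =
      (Fintype.card K - 1) * Fintype.card K ^ (finrank K V - 1) := by
  classical
  have hdim := Module.Dual.finrank_ker_add_one_of_ne_zero hφ
  have hfiber : Fintype.card {v // φ v = d} = Fintype.card K ^ (finrank K V - 1) :=
    calc Fintype.card {v // φ v = d} = Fintype.card {v // φ v = 0} := by
          simp only [Fintype.card_subtype]
          exact AddMonoidHom.card_fiber_eq_of_mem_range φ (LinearMap.surjective hφ d)
            ⟨0, map_zero φ⟩
      _ = Fintype.card (LinearMap.ker φ) := rfl
      _ = _ := by rw [card_eq_pow_finrank (K := K), ← hdim, Nat.add_sub_cancel]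
  rw [Nat.card_eq_fintype_card, Fintype.card_subtype_compl, hfiber,
    card_eq_pow_finrank (K := K) (V := V), ← hdim, Nat.add_sub_cancel, pow_succ, Nat.sub_one_mul,
    mul_comm]

theorem Submodule.natCard_mem_and_apply_ne {W : Submodule K V} {φ : Module.Dual K V}
    (hφ : ∃ w ∈ W, φ w ≠ 0) (d : K) :
    Nat.card {v : V // v ∈ W ∧ φ v ≠ d} =
      (Fintype.card K - 1) * Fintype.card K ^ (finrank K W - 1) := by
  classical
  obtain ⟨w, hw, hφw⟩ := hφ
  rw [← Nat.card_congr (Equiv.subtypeSubtypeEquivSubtypeInter (· ∈ W) (φ · ≠ d))]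
  exact Module.Dual.natCard_apply_ne (φ := φ.domRestrict W)
    (fun h => hφw (LinearMap.congr_fun h ⟨w, hw⟩)) d

end Counting

namespace Matrix

theorem natCard_subtype_eq_sum_of_cons {n k : ℕ} {α : Type*} [Fintype α]
    (p : Matrix (Fin (n + 1)) (Fin k) α → Prop) :
    Nat.card {M // p M} =
      ∑ P : Matrix (Fin n) (Fin k) α, Nat.card {x // p (of (Fin.cons x P.row))} := by
  classical
  simp only [Nat.card_eq_fintype_card, Fintype.card_subtype, Finset.card_filter]
  exact (Fintype.sum_equiv ((Fin.consEquiv fun _ => Fin k → α).trans of) _ _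
    fun _ => rfl).symm.trans (Fintype.sum_prod_type_right _)

variable {K : Type*} [Field K] {n k : ℕ}

theorem rank_of_cons_of_mem {x : Fin k → K} {P : Matrix (Fin n) (Fin k) K}
    (hx : x ∈ span K (Set.range P.row)) : (of (Fin.cons x P.row)).rank = P.rank := by
  rw [rank_eq_finrank_span_row, rank_eq_finrank_span_row, of_row, Fin.range_cons,
    span_insert_eq_span hx]

theorem rank_of_cons_of_notMem {x : Fin k → K} {P : Matrix (Fin n) (Fin k) K}
    (hx : x ∉ span K (Set.range P.row)) : (of (Fin.cons x P.row)).rank = P.rank + 1 := by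
  rw [rank_eq_finrank_span_row, rank_eq_finrank_span_row, of_row, Fin.range_cons, span_insert,
    sup_comm, finrank_sup_span_singleton hx]

theorem rank_of_cons_le_iff {x : Fin k → K} {P : Matrix (Fin n) (Fin k) K} {t : ℕ} :
    (of (Fin.cons x P.row)).rank ≤ t ↔
      P.rank < t ∨ P.rank = t ∧ x ∈ span K (Set.range P.row) := by
  by_cases hx : x ∈ span K (Set.range P.row)
  · simp only [rank_of_cons_of_mem hx, hx, and_true]; omega
  · simp only [rank_of_cons_of_notMem hx, hx, and_false, or_false]; omega

theorem rank_submatrix_succ_of_forall_eq_zero {P : Matrix (Fin n) (Fin (k + 1)) K}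
    (hP : ∀ i, P i 0 = 0) : (P.submatrix id Fin.succ).rank = P.rank := by
  have hPt : Pᵀ = of (Fin.cons 0 (P.submatrix id Fin.succ)ᵀ.row) := by
    ext j i
    cases j using Fin.cases
    · exact hP i
    · rfl
  rw [← rank_transpose P, hPt, rank_of_cons_of_mem (zero_mem _), rank_transpose]

theorem natCard_rank_eq_and_forall_eq_zero (t : ℕ) (p : Matrix (Fin n) (Fin k) K → Prop) :
    Nat.card {P : Matrix (Fin n) (Fin (k + 1)) K //
        P.rank = t ∧ (∀ i, P i 0 = 0) ∧ p (P.submatrix id Fin.succ)} =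
      Nat.card {N // N.rank = t ∧ p N} :=
  Nat.card_congr
    { toFun P := ⟨P.1.submatrix id Fin.succ,
        (rank_submatrix_succ_of_forall_eq_zero P.2.2.1).trans P.2.1, P.2.2.2⟩
      invFun N := ⟨of fun i => Fin.cons 0 (N.1 i),
        (rank_submatrix_succ_of_forall_eq_zero (P := of fun i => Fin.cons 0 (N.1 i))
          fun _ => rfl).symm.trans N.2.1, fun _ => rfl, N.2.2⟩
      left_inv P := by
        ext i j
        cases j using Fin.cases
        · exact (P.2.2.1 i).symm
        · rfl
      right_inv N := rfl }

open Classical in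
theorem natCard_rank_of_cons_le_and_apply_zero_ne [Fintype K]
    (P : Matrix (Fin n) (Fin (k + 1)) K) (t : ℕ) (d : K) :
    Nat.card {x : Fin (k + 1) → K // (of (Fin.cons x P.row)).rank ≤ t ∧ x 0 ≠ d} =
      (if P.rank < t then (Fintype.card K - 1) * Fintype.card K ^ k else 0)
      + (if P.rank = t ∧ ∃ i, P i 0 ≠ 0 then
          (Fintype.card K - 1) * Fintype.card K ^ (t - 1) else 0)
      + (if P.rank = t ∧ (∀ i, P i 0 = 0) ∧ d ≠ 0 then Fintype.card K ^ t else 0) := by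
  set W := span K (Set.range P.row)
  let φ : Module.Dual K (Fin (k + 1) → K) := LinearMap.proj 0
  rcases lt_trichotomy P.rank t with hlt | rfl | hgt
  · have hφ : φ ≠ 0 := fun h => one_ne_zero (LinearMap.congr_fun h fun _ => 1)
    simp only [if_pos hlt, hlt.ne, false_and, if_false, add_zero]
    rw [Nat.card_congr (Equiv.subtypeEquivRight (q := fun x => φ x ≠ d)
        fun x => by simp [rank_of_cons_le_iff, hlt, φ]),
      Module.Dual.natCard_apply_ne hφ, finrank_fin_fun, Nat.add_sub_cancel]
  · have hmem (x : Fin (k + 1) → K) : (of (Fin.cons x P.row)).rank ≤ P.rank ↔ x ∈ W := by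
      simp [rank_of_cons_le_iff, W]
    simp only [lt_irrefl, if_false, true_and, zero_add]
    by_cases h0 : ∃ i, P i 0 ≠ 0
    · obtain ⟨i, hi⟩ := h0
      rw [if_pos (⟨i, hi⟩ : ∃ i, P i 0 ≠ 0),
        if_neg fun h : (∀ i, P i 0 = 0) ∧ d ≠ 0 => hi (h.1 i), add_zero,
        Nat.card_congr (Equiv.subtypeEquivRight (q := fun x => x ∈ W ∧ φ x ≠ d)
          fun x => by rw [hmem]; rfl),
        natCard_mem_and_apply_ne (W := W) (φ := φ) ⟨P.row i, subset_span ⟨i, rfl⟩, hi⟩,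
        rank_eq_finrank_span_row]
    · push Not at h0
      have hW : W ≤ LinearMap.ker φ := span_le.mpr <| by rintro _ ⟨i, rfl⟩; exact h0 i
      rw [if_neg (not_exists.mpr fun i hi => hi (h0 i)), zero_add]
      by_cases hd : d = 0
      · rw [if_neg fun h => h.2 hd]
        refine Nat.card_eq_zero.mpr (.inl ⟨fun ⟨x, hrank, hx⟩ => hx ?_⟩)
        rw [hd]
        exact hW ((hmem x).mp hrank)
      · rw [if_pos ⟨h0, hd⟩, Nat.card_congr (Equiv.subtypeEquivRight (q := (· ∈ W)) fun x =>
            ⟨fun h => (hmem x).mp h.1, fun h => ⟨(hmem x).mpr h, fun hx => hd (hx ▸ hW h)⟩⟩),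
          rank_eq_finrank_span_row]
        exact (Module.natCard_eq_pow_finrank (K := K)).trans (by rw [Nat.card_eq_fintype_card])
  · simp only [not_lt_of_gt hgt, hgt.ne', false_and, if_false, add_zero]
    exact Nat.card_eq_zero.mpr (.inl ⟨fun ⟨x, hrank, _⟩ => by
      rw [rank_of_cons_le_iff] at hrank; omega⟩)

end Matrix

section Counts

variable {K : Type} [Field K] {n k : ℕ}

theorem ptrace_of_cons (s : ℕ) (x : Fin (k + 1) → K) (P : Matrix (Fin n) (Fin (k + 1)) K) :
    ptrace (s + 1) (of (Fin.cons x P.row)) = x 0 + ptrace s (P.submatrix id Fin.succ) := by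
  rw [ptrace, Finset.sum_range_succ', add_comm, ptrace]
  congr 1
  refine Finset.sum_congr rfl fun j _ => ?_
  by_cases h : j < n ∧ j < k
  · rw [dif_pos (by omega), dif_pos h]
    rfl
  · rw [dif_neg (by omega), dif_neg h]

variable [Fintype K]

theorem wfrak_eq_natCard_forall_eq_zero (s t : ℕ) :
    wfrak K n k s t = Nat.card {P : Matrix (Fin n) (Fin (k + 1)) K //
      P.rank = t ∧ (∀ i, P i 0 = 0) ∧ ptrace s (P.submatrix id Fin.succ) ≠ 0} :=
  (natCard_rank_eq_and_forall_eq_zero t fun N => ptrace s N ≠ 0).symm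

theorem mu_succ_right (t : ℕ) :
    mu K n (k + 1) t =
      Nat.card {P : Matrix (Fin n) (Fin (k + 1)) K // P.rank = t ∧ ∃ i, P i 0 ≠ 0} +
        mu K n k t := by
  classical
  have hzero : mu K n k t =
      Nat.card {P : Matrix (Fin n) (Fin (k + 1)) K // P.rank = t ∧ ∀ i, P i 0 = 0} := by
    simpa [mu] using
      (natCard_rank_eq_and_forall_eq_zero (K := K) (n := n) (k := k) t fun _ => True).symm
  rw [hzero, mu]
  simp only [Nat.card_eq_fintype_card, Fintype.card_subtype, ← Finset.filter_filter]
  rw [← Finset.card_filter_add_card_filter_not (fun P => ∃ i, P i 0 ≠ 0)]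
  simp only [not_exists, not_not]

theorem wle_succ (s : ℕ) {t : ℕ} (ht : 1 ≤ t) :
    wle K (n + 1) (k + 1) (s + 1) t =
      Fintype.card K ^ t * wfrak K n k s t
      + (Fintype.card K - 1) * Fintype.card K ^ (t - 1) *
          Nat.card {P : Matrix (Fin n) (Fin (k + 1)) K // P.rank = t ∧ ∃ i, P i 0 ≠ 0}
      + (Fintype.card K - 1) * Fintype.card K ^ k * nu K n (k + 1) (t - 1) := by
  classical
  have hrow (P : Matrix (Fin n) (Fin (k + 1)) K) :
      Nat.card {x // (of (Fin.cons x P.row)).rank ≤ t ∧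
          ptrace (s + 1) (of (Fin.cons x P.row)) ≠ 0} =
        Nat.card {x : Fin (k + 1) → K // (of (Fin.cons x P.row)).rank ≤ t ∧
          x 0 ≠ -ptrace s (P.submatrix id Fin.succ)} := by
    simp only [ptrace_of_cons, ne_eq, ← eq_neg_iff_add_eq_zero]
  have hnu : nu K n (k + 1) (t - 1) =
      Nat.card {P : Matrix (Fin n) (Fin (k + 1)) K // P.rank < t} :=
    Nat.card_congr <| Equiv.subtypeEquivRight fun P => by omega
  rw [wle, natCard_subtype_eq_sum_of_cons]
  simp only [hrow, natCard_rank_of_cons_le_and_apply_zero_ne, Finset.sum_add_distrib,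
    ← Finset.sum_filter, Finset.sum_const, smul_eq_mul]
  rw [hnu, wfrak_eq_natCard_forall_eq_zero]
  simp only [neg_ne_zero, Nat.card_eq_fintype_card, Fintype.card_subtype]
  ring

end Counts

theorem stmt_6_general (q t l m r : ℕ)
    (K : Type) [Field K] [Fintype K] (hK : Fintype.card K = q)
    (hr : 1 ≤ r) (hlm : l ≤ m) (ht : 1 ≤ t) (htl : t < l) :
    (wle K l m r t : ℤ) =
      (q : ℤ) ^ t * wfrak K (l - 1) (m - 1) (r - 1) t
      + ((q : ℤ) - 1) * q ^ (t - 1) * ((mu K (l - 1) m t : ℤ) - (mu K (l - 1) (m - 1) t : ℤ))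
      + ((q : ℤ) - 1) * q ^ (m - 1) * (nu K (l - 1) m (t - 1) : ℤ) := by
  obtain ⟨n, rfl⟩ : ∃ n, l = n + 1 := ⟨l - 1, by omega⟩
  obtain ⟨k, rfl⟩ : ∃ k, m = k + 1 := ⟨m - 1, by omega⟩
  obtain ⟨s, rfl⟩ : ∃ s, r = s + 1 := ⟨r - 1, by omega⟩
  subst hK
  have hq : 1 ≤ Fintype.card K := Fintype.card_pos
  simp only [Nat.add_sub_cancel, wle_succ s ht, mu_succ_right]
  push_cast [Nat.cast_sub hq]
  ring

theorem stmt_6 (q t l m r : ℕ) (hq : IsPrimePow q)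
    (K : Type) [Field K] [Fintype K] (hK : Fintype.card K = q)
    (hr : 1 ≤ r) (hrl : r ≤ l) (hlm : l ≤ m) (ht : 1 ≤ t) (htl : t < l) :
    (wle K l m r t : ℤ) =
      (q : ℤ) ^ t * wfrak K (l - 1) (m - 1) (r - 1) t
      + ((q : ℤ) - 1) * q ^ (t - 1) * ((mu K (l - 1) m t : ℤ) - (mu K (l - 1) (m - 1) t : ℤ))
      + ((q : ℤ) - 1) * q ^ (m - 1) * (nu K (l - 1) m (t - 1) : ℤ) :=
  stmt_6_general q t l m r K hK hr hlm ht htl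
end

section
/- Let q be a prime power, F_q the finite field with q elements, and integers 1 ≤ t ≤ ℓ ≤ m and (ℓ−t)m ≤ s ≤ ℓm. Then the minimum, over all s-dimensional F_q-linear subspaces W of Mat_{ℓ×m}, of #{M ∈ Mat_{ℓ×m} : rank M ≤ t and ⟨F,M⟩ ≠ 0 for some F ∈ W} equals ν_t(ℓ,m) − q^{ℓm−s}. (Equivalently, the s-th generalized Hamming weight of the determinantal code Ĉ_det(t;ℓ,m) equals its length minus (q^{ℓm−s} − 1)/(q−1).) -/
/-!
The matrices `M` with `⟨F, M⟩ = 0` for every `F ∈ W` form the orthogonal complement `W⊥` of `W`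
for the nondegenerate pairing `⟨F, M⟩ = trace (F * Mᵀ)`, so `W⊥` has `q ^ (l * m - s)` elements.
Hence the count in question is `ν_t(l, m)` minus the number of matrices of rank `≤ t` in `W⊥`,
which is at least `ν_t(l, m) - q ^ (l * m - s)`, with equality as soon as every matrix in `W⊥` has
rank `≤ t`. Since `l * m - s ≤ t * m`, such a `W⊥` can be taken inside the `t * m`-dimensional
space of matrices supported on the first `t` rows.
-/

open Finset Matrix

open Module

theorem Nat.card_subtype_and_add_card_subtype_and_not {α : Type*} [Finite α] (p q : α → Prop) :
    Nat.card {x // p x ∧ q x} + Nat.card {x // p x ∧ ¬q x} = Nat.card {x // p x} := by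
  classical
  have := Fintype.ofFinite α
  simp only [Nat.card_eq_fintype_card, Fintype.card_subtype, ← Finset.filter_filter]
  exact Finset.card_filter_add_card_filter_not _

theorem Nat.card_subtype_and_mem_le {α S : Type*} [SetLike S α] (p : α → Prop) (s : S)
    [Finite s] : Nat.card {x // p x ∧ x ∈ s} ≤ Nat.card s :=
  Nat.card_mono (Set.toFinite (s : Set α)) fun _ hx => hx.2

theorem Nat.card_subtype_and_mem_of_forall {α S : Type*} [SetLike S α] {p : α → Prop} {s : S}
    (h : ∀ x ∈ s, p x) : Nat.card {x // p x ∧ x ∈ s} = Nat.card s :=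
  Nat.card_congr (Equiv.subtypeEquivRight fun x => and_iff_right_of_imp (h x))

theorem Submodule.exists_le_finrank_eq {K V : Type*} [DivisionRing K] [AddCommGroup V]
    [Module K V] (R : Submodule K V) [FiniteDimensional K R] {k : ℕ} (hk : k ≤ finrank K R) :
    ∃ U ≤ R, finrank K U = k := by
  obtain ⟨f, hf⟩ := exists_linearIndependent_of_le_finrank hk
  refine ⟨span K (Set.range (R.subtype ∘ f)), span_le.mpr ?_, ?_⟩
  · rintro _ ⟨i, rfl⟩
    exact (f i).2
  · rw [finrank_span_eq_card (hf.map' R.subtype R.ker_subtype), Fintype.card_fin]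

namespace Matrix

variable {K : Type*} [Field K] {ι κ : Type*} [Fintype κ]

section FrobeniusForm

variable (K ι κ) in
noncomputable def frobeniusForm [Fintype ι] : LinearMap.BilinForm K (Matrix ι κ K) :=
  ((mulLinearMap K).compl₂ (transposeLinearEquiv ι κ K K).toLinearMap).compr₂
    (traceLinearMap ι K K)

variable [Fintype ι]

@[simp]
theorem frobeniusForm_apply (G M : Matrix ι κ K) : frobeniusForm K ι κ G M = trace (G * Mᵀ) :=
  rfl

theorem frobeniusForm_apply_comm (G M : Matrix ι κ K) :
    frobeniusForm K ι κ G M = frobeniusForm K ι κ M G := by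
  rw [frobeniusForm_apply, frobeniusForm_apply, ← trace_transpose, transpose_mul,
    transpose_transpose]

theorem frobeniusForm_isRefl : LinearMap.BilinForm.IsRefl (frobeniusForm K ι κ) :=
  fun G M h => by rwa [frobeniusForm_apply_comm] at h

theorem frobeniusForm_nondegenerate [DecidableEq ι] [DecidableEq κ] :
    LinearMap.BilinForm.Nondegenerate (frobeniusForm K ι κ) := by
  have hrefl : LinearMap.IsRefl (frobeniusForm K ι κ) := frobeniusForm_isRefl
  refine hrefl.nondegenerate_iff_separatingLeft.mpr fun G hG => ?_
  ext i j
  simpa [transpose_single, trace_mul_single] using hG (single i j 1)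

theorem finrank_frobeniusForm_orthogonal [DecidableEq ι] [DecidableEq κ]
    (W : Submodule K (Matrix ι κ K)) :
    finrank K ((frobeniusForm K ι κ).orthogonal W) =
      Fintype.card ι * Fintype.card κ - finrank K W := by
  rw [LinearMap.BilinForm.finrank_orthogonal frobeniusForm_nondegenerate, finrank_matrix,
    finrank_self, mul_one]

end FrobeniusForm

section RankLe

variable {τ : Type*} [Fintype τ]

theorem rank_le_card_of_mem_range_mulLeftLinearMap (P : Matrix ι τ K) {M : Matrix ι κ K}
    (hM : M ∈ LinearMap.range (mulLeftLinearMap κ K P)) : M.rank ≤ Fintype.card τ := by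
  obtain ⟨N, rfl⟩ := hM
  exact (rank_mul_le_left P N).trans P.rank_le_card_width

theorem finrank_range_mulLeftLinearMap_of_mul_eq_one [Fintype ι] [DecidableEq τ]
    {P : Matrix ι τ K} {Q : Matrix τ ι K} (hQP : Q * P = 1) :
    finrank K (LinearMap.range (mulLeftLinearMap κ K P)) = Fintype.card τ * Fintype.card κ := by
  have hinj : Function.Injective (mulLeftLinearMap κ K P) := fun N N' h => by
    simpa [← Matrix.mul_assoc, hQP] using congrArg (Q * ·) h
  rw [LinearMap.finrank_range_of_inj hinj, finrank_matrix, finrank_self, mul_one]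

theorem exists_submodule_finrank_eq_forall_rank_le [Fintype ι] [DecidableEq ι] [DecidableEq τ]
    (e : τ ↪ ι) {k : ℕ} (hk : k ≤ Fintype.card τ * Fintype.card κ) :
    ∃ U : Submodule K (Matrix ι κ K), finrank K U = k ∧ ∀ M ∈ U, M.rank ≤ Fintype.card τ := by
  set P : Matrix ι τ K := (1 : Matrix ι ι K).submatrix id e
  have hQP : (1 : Matrix ι ι K).submatrix e id * P = 1 := by
    rw [← submatrix_mul _ _ _ _ _ Function.bijective_id, Matrix.mul_one, submatrix_one_embedding]
  obtain ⟨U, hUP, hU⟩ := (LinearMap.range (mulLeftLinearMap κ K P)).exists_le_finrank_eq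
    (k := k) (by rwa [finrank_range_mulLeftLinearMap_of_mul_eq_one hQP])
  exact ⟨U, hU, fun M hM => rank_le_card_of_mem_range_mulLeftLinearMap P (hUP hM)⟩

end RankLe

section Counting

variable [Fintype ι] [Fintype K]

theorem card_exists_trace_ne_zero_add_card_mem_orthogonal (t : ℕ)
    (W : Submodule K (Matrix ι κ K)) :
    Nat.card {M : Matrix ι κ K // M.rank ≤ t ∧ ∃ G ∈ W, trace (G * Mᵀ) ≠ 0} +
      Nat.card {M // M.rank ≤ t ∧ M ∈ (frobeniusForm K ι κ).orthogonal W} =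
      Nat.card {M : Matrix ι κ K // M.rank ≤ t} := by
  have horth (M : Matrix ι κ K) :
      M ∈ (frobeniusForm K ι κ).orthogonal W ↔ ¬∃ G ∈ W, trace (G * Mᵀ) ≠ 0 := by
    simp
  simp_rw [horth]
  exact Nat.card_subtype_and_add_card_subtype_and_not (fun M : Matrix ι κ K => M.rank ≤ t) _

variable [DecidableEq ι] [DecidableEq κ]

theorem card_rank_le_sub_pow_le_card_exists_trace_ne_zero (t : ℕ)
    (W : Submodule K (Matrix ι κ K)) :
    (Nat.card {M : Matrix ι κ K // M.rank ≤ t} : ℤ) -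
        (Fintype.card K : ℤ) ^ (Fintype.card ι * Fintype.card κ - finrank K W) ≤
      Nat.card {M : Matrix ι κ K // M.rank ≤ t ∧ ∃ G ∈ W, trace (G * Mᵀ) ≠ 0} := by
  have hsplit := card_exists_trace_ne_zero_add_card_mem_orthogonal t W
  have hle := Nat.card_subtype_and_mem_le (fun M : Matrix ι κ K => M.rank ≤ t)
    ((frobeniusForm K ι κ).orthogonal W)
  rw [natCard_eq_pow_finrank (K := K) (V := (frobeniusForm K ι κ).orthogonal W),
    finrank_frobeniusForm_orthogonal, Nat.card_eq_fintype_card (α := K)] at hle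
  rw [← Nat.cast_pow]
  omega

theorem card_exists_trace_ne_zero_orthogonal_of_forall_rank_le {t : ℕ}
    {U : Submodule K (Matrix ι κ K)} (hU : ∀ M ∈ U, M.rank ≤ t) :
    (Nat.card {M : Matrix ι κ K //
        M.rank ≤ t ∧ ∃ G ∈ (frobeniusForm K ι κ).orthogonal U, trace (G * Mᵀ) ≠ 0} : ℤ) =
      Nat.card {M : Matrix ι κ K // M.rank ≤ t} - (Fintype.card K : ℤ) ^ finrank K U := by
  have hsplit := card_exists_trace_ne_zero_add_card_mem_orthogonal t
    ((frobeniusForm K ι κ).orthogonal U)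
  rw [LinearMap.BilinForm.orthogonal_orthogonal frobeniusForm_nondegenerate frobeniusForm_isRefl,
    Nat.card_subtype_and_mem_of_forall hU, natCard_eq_pow_finrank (K := K) (V := U),
    Nat.card_eq_fintype_card (α := K)] at hsplit
  rw [← Nat.cast_pow]
  omega

end Counting

end Matrix

theorem stmt_13_general (q t l m s : ℕ)
    (K : Type) [Field K] [Fintype K] (hK : Fintype.card K = q)
    (htl : t ≤ l)
    (hs1 : (l - t) * m ≤ s) (hs2 : s ≤ l * m) :
    IsLeast {n : ℤ | ∃ W : Submodule K (Matrix (Fin l) (Fin m) K),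
        Module.finrank K W = s ∧
        n = (Nat.card {M : Matrix (Fin l) (Fin m) K //
          M.rank ≤ t ∧ ∃ G ∈ W, Matrix.trace (G * Mᵀ) ≠ 0} : ℤ)}
      ((nu K l m t : ℤ) - (q : ℤ) ^ (l * m - s)) := by
  subst hK
  constructor
  · have hts : l * m - s ≤ t * m := by
      have := Nat.mul_le_mul_right m htl
      rw [Nat.sub_mul] at hs1
      omega
    obtain ⟨U, hU, hUrank⟩ := exists_submodule_finrank_eq_forall_rank_le (K := K) (κ := Fin m)
      (Fin.castLEEmb htl) (k := l * m - s) (by simpa using hts)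
    refine ⟨(frobeniusForm K (Fin l) (Fin m)).orthogonal U, ?_, ?_⟩
    · rw [finrank_frobeniusForm_orthogonal, hU]
      simp only [Fintype.card_fin]
      omega
    · rw [card_exists_trace_ne_zero_orthogonal_of_forall_rank_le (by simpa using hUrank), hU]
      rfl
  · rintro _ ⟨W, hW, rfl⟩
    have h := card_rank_le_sub_pow_le_card_exists_trace_ne_zero t W
    rwa [Fintype.card_fin, Fintype.card_fin, hW] at h

theorem stmt_13 (q t l m s : ℕ) (hq : IsPrimePow q)
    (K : Type) [Field K] [Fintype K] (hK : Fintype.card K = q)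
    (ht : 1 ≤ t) (htl : t ≤ l) (hlm : l ≤ m)
    (hs1 : (l - t) * m ≤ s) (hs2 : s ≤ l * m) :
    IsLeast {n : ℤ | ∃ W : Submodule K (Matrix (Fin l) (Fin m) K),
        Module.finrank K W = s ∧
        n = (Nat.card {M : Matrix (Fin l) (Fin m) K //
          M.rank ≤ t ∧ ∃ G ∈ W, Matrix.trace (G * Mᵀ) ≠ 0} : ℤ)}
      ((nu K l m t : ℤ) - (q : ℤ) ^ (l * m - s)) :=
  stmt_13_general q t l m s K hK htl hs1 hs2
end

section
/- Let q be a prime power, F_q the finite field with q elements, and integers 1 ≤ t ≤ ℓ ≤ m with m ≥ 2. Then the smallest integer n ≥ 1 for which there exist n nonzero matrices M_1, …, M_n ∈ Mat_{ℓ×m}, each of rank at most t, pairwise non-proportional (no M_i is an F_q-scalar multiple of M_j for i ≠ j), that are linearly dependent over F_q, equals 3. (Equivalently, the minimum distance of the dual code Ĉ_det(t;ℓ,m)^⊥ equals 3.) -/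
/-!
One or two nonzero, pairwise non-proportional vectors are always linearly independent, so no
dependent family has fewer than three members. Conversely, for `u ≠ 0` and independent `v, w`,
the rank-one matrices `u vᵀ`, `u wᵀ`, `u (v + w)ᵀ` are pairwise non-proportional (since
`w ↦ u wᵀ` is injective) and the first two sum to the third.
-/

open Finset Matrix

section Nonproportional

variable (K : Type*) {V W ι : Type*} [Field K] [AddCommGroup V] [Module K V]
  [AddCommGroup W] [Module K W]

def PairwiseNonproportional (v : ι → V) : Prop :=
  ∀ i j, i ≠ j → ∀ c : K, v i ≠ c • v j

variable {K}

theorem PairwiseNonproportional.ne_zero [Nontrivial ι] {v : ι → V}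
    (hv : PairwiseNonproportional K v) (i : ι) : v i ≠ 0 := by
  obtain ⟨j, hij⟩ := exists_ne i
  simpa using hv i j hij.symm 0

theorem PairwiseNonproportional.map {v : ι → V} (hv : PairwiseNonproportional K v)
    (f : V →ₗ[K] W) (hf : Function.Injective f) : PairwiseNonproportional K (f ∘ v) := by
  intro i j hij c h
  exact hv i j hij c (hf (by simpa using h))

theorem linearIndependent_of_pairwiseNonproportional {n : ℕ} (hn : n ≤ 2) {v : Fin n → V}
    (h0 : ∀ i, v i ≠ 0) (hv : PairwiseNonproportional K v) : LinearIndependent K v := by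
  interval_cases n
  · exact linearIndependent_empty_type
  · exact linearIndependent_unique_iff.mpr (h0 0)
  · exact linearIndependent_fin2.mpr ⟨h0 1, fun c h => hv 0 1 (by decide) c h.symm⟩

theorem pairwiseNonproportional_add {x y : V} (hxy : LinearIndependent K ![x, y]) :
    PairwiseNonproportional K ![x, y, x + y] := by
  have h := LinearIndependent.pair_iff.mp hxy
  intro i j hij c hc
  fin_cases i <;> fin_cases j <;>
    simp only [Fin.zero_eta, Fin.mk_one, Fin.reduceFinMk, Matrix.cons_val, ne_eq,
      not_true_eq_false] at hij hc
  · have := h 1 (-c) (by linear_combination (norm := module) hc); grind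
  · have := h (1 - c) (-c) (by linear_combination (norm := module) hc); grind
  · have := h (-c) 1 (by linear_combination (norm := module) hc); grind
  · have := h (-c) (1 - c) (by linear_combination (norm := module) hc); grind
  · have := h (1 - c) 1 (by linear_combination (norm := module) hc); grind
  · have := h 1 (1 - c) (by linear_combination (norm := module) hc); grind

theorem not_linearIndependent_add (x y : V) : ¬ LinearIndependent K ![x, y, x + y] := by
  intro h
  have := Fintype.linearIndependent_iff.mp h ![1, 1, -1] (by simp [Fin.sum_univ_three]; abel)
  simpa using this 0

end Nonproportional

theorem Matrix.vecMulVecBilin_injective {K m n : Type*} [Field K] {u : m → K} (hu : u ≠ 0) :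
    Function.Injective (vecMulVecBilin K K u : (n → K) →ₗ[K] Matrix m n K) := by
  rw [← LinearMap.ker_eq_bot, LinearMap.ker_eq_bot']
  intro v hv
  obtain ⟨i, hi⟩ : ∃ i, u i ≠ 0 := Function.ne_iff.mp hu
  ext j
  simpa [vecMulVec_apply, hi] using congr_fun (congr_fun hv i) j

theorem Matrix.exists_pairwiseNonproportional_dependent_rank_one (K m n : Type*) [Field K]
    [Fintype n] [DecidableEq m] [DecidableEq n] [Nonempty m] [Nontrivial n] :
    ∃ M : Fin 3 → Matrix m n K, (∀ i, (M i).rank ≤ 1) ∧ PairwiseNonproportional K M ∧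
      ¬ LinearIndependent K M := by
  obtain ⟨i⟩ := ‹Nonempty m›
  obtain ⟨j, j', hj⟩ := exists_pair_ne n
  have hvw : LinearIndependent K ![(Pi.single j 1 : n → K), Pi.single j' 1] := by
    refine LinearIndependent.pair_iff.mpr fun s t hst => ⟨?_, ?_⟩
    · simpa [hj] using congr_fun hst j
    · simpa [hj.symm] using congr_fun hst j'
  let f : (n → K) →ₗ[K] Matrix m n K := vecMulVecBilin K K (Pi.single i 1)
  refine ⟨f ∘ ![Pi.single j 1, Pi.single j' 1, Pi.single j 1 + Pi.single j' 1],
    fun _ => rank_vecMulVec_le _ _, (pairwiseNonproportional_add hvw).map f ?_,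
    fun h => not_linearIndependent_add _ _ h.of_comp⟩
  exact vecMulVecBilin_injective (by simp)

theorem stmt_14_general (t l m : ℕ)
    (K : Type) [Field K]
    (ht : 1 ≤ t) (htl : t ≤ l) (hm2 : 2 ≤ m) :
    IsLeast {n : ℕ | 1 ≤ n ∧ ∃ M : Fin n → Matrix (Fin l) (Fin m) K,
        (∀ i, M i ≠ 0) ∧
        (∀ i, (M i).rank ≤ t) ∧
        (∀ i j, i ≠ j → ∀ c : K, M i ≠ c • M j) ∧
        ¬ LinearIndependent K M} 3 := by
  constructor
  · have : Nonempty (Fin l) := Fin.pos_iff_nonempty.mp (by omega)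
    have : Nontrivial (Fin m) := Fin.nontrivial_iff_two_le.mpr hm2
    obtain ⟨M, hrank, hM, hdep⟩ :=
      exists_pairwiseNonproportional_dependent_rank_one K (Fin l) (Fin m)
    exact ⟨by norm_num, M, hM.ne_zero, fun i => (hrank i).trans ht, hM, hdep⟩
  · rintro n ⟨-, M, hM0, -, hM, hdep⟩
    by_contra! hn
    exact hdep (linearIndependent_of_pairwiseNonproportional (by omega) hM0 hM)

theorem stmt_14 (q t l m : ℕ) (hq : IsPrimePow q)
    (K : Type) [Field K] [Fintype K] (hK : Fintype.card K = q)
    (ht : 1 ≤ t) (htl : t ≤ l) (hlm : l ≤ m) (hm2 : 2 ≤ m) :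
    IsLeast {n : ℕ | 1 ≤ n ∧ ∃ M : Fin n → Matrix (Fin l) (Fin m) K,
        (∀ i, M i ≠ 0) ∧
        (∀ i, (M i).rank ≤ t) ∧
        (∀ i j, i ≠ j → ∀ c : K, M i ≠ c • M j) ∧
        ¬ LinearIndependent K M} 3 :=
  stmt_14_general t l m K ht htl hm2
end

section
/- Let q be a prime power, F_q the finite field with q elements, and integers 1 ≤ t ≤ ℓ ≤ m and 1 ≤ r < ℓ. Then 𝔴_r(t;ℓ,m) = q^t · 𝔴_r(t;ℓ−1,m) + (q^m − q^{t−1}) · 𝔴_r(t−1;ℓ−1,m). -/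
/-!
Split off the last row `v` of an `ℓ × m` matrix and sum over its first `ℓ - 1` rows `N`. Since
`r ≤ ℓ - 1`, the partial trace only sees `N`. Appending `v` keeps the rank when `v` lies in the
row space of `N` (`q ^ rank N` choices) and raises it by one otherwise (`q ^ m - q ^ rank N`
choices).
-/

open Finset Matrix

open Module Submodule

theorem Submodule.finrank_span_insert_of_notMem {K V : Type*} [DivisionRing K] [AddCommGroup V]
    [Module K V] [FiniteDimensional K V] {s : Set V} {v : V} (hv : v ∉ span K s) :
    finrank K (span K (insert v s)) = finrank K (span K s) + 1 := by
  rw [span_insert, sup_comm, finrank_sup_span_singleton hv]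

section Snoc

variable {α : Type*} {n m : ℕ}

theorem Matrix.range_row_of_snoc (N : Matrix (Fin n) (Fin m) α) (v : Fin m → α) :
    Set.range (of (Fin.snoc N.row v)).row = insert v (Set.range N.row) :=
  Fin.range_snoc _ _

theorem Matrix.card_filter_snoc [Fintype α]
    (P : Matrix (Fin (n + 1)) (Fin m) α → Prop) [DecidablePred P] :
    #{M | P M} = ∑ N : Matrix (Fin n) (Fin m) α, #{v | P (of (Fin.snoc N.row v))} := by
  simp only [card_filter]
  rw [← ((Fin.snocEquiv fun _ => Fin m → α).trans of).sum_comp, Fintype.sum_prod_type_right]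
  rfl

variable {K : Type*} [Field K]

theorem Matrix.rank_of_snoc_of_mem {N : Matrix (Fin n) (Fin m) K} {v : Fin m → K}
    (hv : v ∈ span K (Set.range N.row)) : (of (Fin.snoc N.row v)).rank = N.rank := by
  rw [rank_eq_finrank_span_row, rank_eq_finrank_span_row, range_row_of_snoc,
    span_insert_eq_span hv]

theorem Matrix.rank_of_snoc_of_notMem {N : Matrix (Fin n) (Fin m) K} {v : Fin m → K}
    (hv : v ∉ span K (Set.range N.row)) : (of (Fin.snoc N.row v)).rank = N.rank + 1 := by
  rw [rank_eq_finrank_span_row, rank_eq_finrank_span_row, range_row_of_snoc]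
  exact finrank_span_insert_of_notMem hv

end Snoc

section FiniteField

variable {K : Type*} [Field K] [Fintype K]

theorem Submodule.card_filter_mem {V : Type*} [AddCommGroup V] [Module K V] [Fintype V]
    (W : Submodule K V) [DecidablePred (· ∈ W)] :
    #{v | v ∈ W} = Fintype.card K ^ finrank K W := by
  rw [← card_eq_pow_finrank, Fintype.card_subtype]

theorem Submodule.card_filter_notMem {V : Type*} [AddCommGroup V] [Module K V] [Fintype V]
    [DecidableEq V] (W : Submodule K V) [DecidablePred (· ∈ W)] :
    #{v | v ∉ W} = Fintype.card K ^ finrank K V - Fintype.card K ^ finrank K W := by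
  rw [filter_not, card_sdiff_of_subset (filter_subset _ _), card_filter_mem, card_univ,
    card_eq_pow_finrank (K := K)]

open scoped Classical in
theorem Matrix.card_filter_rank_of_snoc_eq {n m t : ℕ} (N : Matrix (Fin n) (Fin m) K)
    (ht : 1 ≤ t) :
    #{v | (of (Fin.snoc N.row v)).rank = t} =
      (if N.rank = t then Fintype.card K ^ t else 0) +
        (if N.rank = t - 1 then Fintype.card K ^ m - Fintype.card K ^ (t - 1) else 0) := by
  set W := span K (Set.range N.row)
  have hW : finrank K W = N.rank := (rank_eq_finrank_span_row N).symm
  have hrank (v : Fin m → K) :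
      (of (Fin.snoc N.row v)).rank = if v ∈ W then N.rank else N.rank + 1 := by
    split_ifs with hv
    exacts [rank_of_snoc_of_mem hv, rank_of_snoc_of_notMem hv]
  simp only [hrank, apply_ite (· = t)]
  by_cases h₁ : N.rank = t
  · subst h₁
    simp [card_filter_mem, hW, (Nat.sub_one_lt_of_lt ht).ne']
  · by_cases h₂ : N.rank = t - 1
    · obtain rfl : t = N.rank + 1 := by omega
      simp [card_filter_notMem, hW]
    · have h₃ : N.rank + 1 ≠ t := by omega
      simp [h₁, h₂, h₃]

end FiniteField

section PartialTrace

variable {K : Type} [Field K]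

theorem ptrace_of_snoc {n m r : ℕ} (N : Matrix (Fin n) (Fin m) K) (v : Fin m → K)
    (hr : r ≤ n) : ptrace r (of (Fin.snoc N.row v)) = ptrace r N := by
  refine sum_congr rfl fun i hi => ?_
  have hin : i < n := (mem_range.mp hi).trans_le hr
  by_cases him : i < m
  · simp [hin, him, Fin.snoc, Nat.lt_succ_of_lt hin]
  · simp [him]

open scoped Classical in
theorem card_filter_rank_ptrace_of_snoc [Fintype K] {n m r t : ℕ}
    (N : Matrix (Fin n) (Fin m) K) (hr : r ≤ n) (ht : 1 ≤ t) :
    #{v | (of (Fin.snoc N.row v)).rank = t ∧ ptrace r (of (Fin.snoc N.row v)) ≠ 0} =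
      (if N.rank = t ∧ ptrace r N ≠ 0 then Fintype.card K ^ t else 0) +
        (if N.rank = t - 1 ∧ ptrace r N ≠ 0 then
          Fintype.card K ^ m - Fintype.card K ^ (t - 1) else 0) := by
  simp only [ptrace_of_snoc N _ hr]
  by_cases h : ptrace r N = 0
  · simp [h]
  · simp [h, card_filter_rank_of_snoc_eq N ht]

open scoped Classical in
theorem wfrak_eq_card [Fintype K] (a b r t : ℕ) :
    wfrak K a b r t = #{M : Matrix (Fin a) (Fin b) K | M.rank = t ∧ ptrace r M ≠ 0} := by
  rw [wfrak, Nat.card_eq_fintype_card, Fintype.card_subtype]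

end PartialTrace

theorem stmt_16_general (q t l m r : ℕ)
    (K : Type) [Field K] [Fintype K] (hK : Fintype.card K = q)
    (ht : 1 ≤ t) (hrl : r < l) :
    wfrak K l m r t =
      q ^ t * wfrak K (l - 1) m r t + (q ^ m - q ^ (t - 1)) * wfrak K (l - 1) m r (t - 1) := by
  classical
  obtain ⟨n, rfl⟩ : ∃ n, l = n + 1 := ⟨l - 1, by omega⟩
  subst hK
  rw [Nat.add_sub_cancel, wfrak_eq_card, card_filter_snoc]
  simp only [card_filter_rank_ptrace_of_snoc _ (Nat.lt_succ_iff.mp hrl) ht, sum_add_distrib,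
    ← sum_filter, sum_const, smul_eq_mul, wfrak_eq_card]
  ring

theorem stmt_16 (q t l m r : ℕ) (hq : IsPrimePow q)
    (K : Type) [Field K] [Fintype K] (hK : Fintype.card K = q)
    (ht : 1 ≤ t) (htl : t ≤ l) (hlm : l ≤ m) (hr : 1 ≤ r) (hrl : r < l) :
    wfrak K l m r t =
      q ^ t * wfrak K (l - 1) m r t + (q ^ m - q ^ (t - 1)) * wfrak K (l - 1) m r (t - 1) :=
  stmt_16_general q t l m r K hK ht hrl
end
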